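/- Let 0 ≤ ε < 1, 0 ≤ p ≤ 1, let N be the single-qubit generalized amplitude damping channel with Kraus operators E_0 = √p·diag(1, √(1−ε)), E_1 = √p·√ε·|0⟩⟨1|, E_2 = √(1−p)·diag(√(1−ε), 1), E_3 = √(1−p)·√ε·|1⟩⟨0|, and let O = Z be the Pauli Z matrix. Then the retrieving cost γ_O(N) equals (|1−2p|·ε + 1)/(1−ε), and it is attained by the map D = c_1·D_1 + c_2·D_2 with c_1 = −c_2 = (|1−2p|·ε+1)/(2(1−ε)) and channels D_1, D_2 whose Choi matrices are J_{D_1} = (1/(2(|1−2p|ε+1)))·Z⊗Z + (ε(1−2p)/(2(|1−2p|ε+1)))·I⊗Z + (1/2)·I⊗I and J_{D_2} = −(1/(2(|1−2p|ε+1)))·Z⊗Z − (ε(1−2p)/(2(|1−2p|ε+1)))·I⊗Z + (1/2)·I⊗I. -/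

import Mathlib

open Matrix
open scoped Kronecker ComplexOrder

abbrev MatC (n : Type*) := Matrix n n ℂ

/-- A linear map on matrices is Hermitian-preserving if it sends Hermitian
matrices to Hermitian matrices. -/
def IsHermitianPreserving {n : Type*} [Fintype n] [DecidableEq n]
    (M : MatC n →ₗ[ℂ] MatC n) : Prop :=
  ∀ X : MatC n, X.IsHermitian → (M X).IsHermitian

/-- A linear map on matrices is trace-scaling if it scales the trace by a fixed
real factor. -/
def IsTraceScaling {n : Type*} [Fintype n] [DecidableEq n]
    (M : MatC n →ₗ[ℂ] MatC n) : Prop :=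
  ∃ p : ℝ, ∀ X : MatC n, (M X).trace = (p : ℂ) * X.trace

/-- The Choi matrix `J_M = Σ_{i,j} |i⟩⟨j| ⊗ M(|i⟩⟨j|)` of a linear map on matrices. -/
def choi {n : Type*} [Fintype n] [DecidableEq n]
    (M : MatC n →ₗ[ℂ] MatC n) : Matrix (n × n) (n × n) ℂ :=
  Matrix.of fun p q => M (Matrix.single p.1 q.1 1) p.2 q.2

/-- A quantum channel is a completely positive (positive semidefinite Choi matrix)
trace-preserving linear map. -/
def IsQuantumChannel {n : Type*} [Fintype n] [DecidableEq n]
    (M : MatC n →ₗ[ℂ] MatC n) : Prop :=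
  (choi M).PosSemidef ∧ ∀ X : MatC n, (M X).trace = X.trace

/-- `Md` is the adjoint of `M` with respect to the Hilbert-Schmidt inner product
`⟨A, B⟩ = tr[A† B]`. -/
def IsAdjointPair {n : Type*} [Fintype n] [DecidableEq n]
    (M Md : MatC n →ₗ[ℂ] MatC n) : Prop :=
  ∀ A B : MatC n, (Aᴴ * M B).trace = ((Md A)ᴴ * B).trace

/-- A density matrix: positive semidefinite with unit trace. -/
def IsDensityMatrix {n : Type*} [Fintype n] [DecidableEq n] (ρ : MatC n) : Prop :=
  ρ.PosSemidef ∧ ρ.trace = 1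

/-- The Hermitian matrices as a real submodule of the complex matrices. -/
noncomputable def hermSubmodule (n : Type*) [Fintype n] [DecidableEq n] :
    Submodule ℝ (MatC n) :=
  selfAdjoint.submodule ℝ (MatC n)

/-- The image of the Hermitian matrices under a (complex-)linear map, as a real
submodule. -/
noncomputable def hermitianImage {n : Type*} [Fintype n] [DecidableEq n]
    (M : MatC n →ₗ[ℂ] MatC n) : Submodule ℝ (MatC n) :=
  (hermSubmodule n).map (M.restrictScalars ℝ)

/-- The linear map `ρ ↦ Σ_i E_i ρ E_i†` given by a finite family of Kraus operators. -/
noncomputable def krausMap {n : Type*} [Fintype n] {k : ℕ} (E : Fin k → Matrix n n ℂ) :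
    MatC n →ₗ[ℂ] MatC n where
  toFun ρ := ∑ i, E i * ρ * (E i)ᴴ
  map_add' ρ σ := by
    simp [Matrix.mul_add, Matrix.add_mul, Finset.sum_add_distrib]
  map_smul' c ρ := by
    simp [Matrix.mul_smul, Matrix.smul_mul, Finset.smul_sum]

/-- The Pauli X matrix. -/
def PauliX : MatC (Fin 2) := !![0, 1; 1, 0]

/-- The Pauli Y matrix. -/
def PauliY : MatC (Fin 2) := !![0, -Complex.I; Complex.I, 0]

/-- The Pauli Z matrix. -/
def PauliZ : MatC (Fin 2) := !![1, 0; 0, -1]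

/-- The Kraus operators of the single-qubit generalized amplitude damping channel
with damping factor `ε` and temperature indicator `p`. -/
noncomputable def gadKraus (p ε : ℝ) : Fin 4 → MatC (Fin 2) :=
  ![(Real.sqrt p : ℂ) • !![1, 0; 0, (Real.sqrt (1 - ε) : ℂ)],
    ((Real.sqrt p * Real.sqrt ε : ℝ) : ℂ) • !![0, 1; 0, 0],
    (Real.sqrt (1 - p) : ℂ) • !![(Real.sqrt (1 - ε) : ℂ), 0; 0, 1],
    ((Real.sqrt (1 - p) * Real.sqrt ε : ℝ) : ℂ) • !![0, 0; 1, 0]]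

/-- The single-qubit generalized amplitude damping channel. -/
noncomputable def gad (p ε : ℝ) : MatC (Fin 2) →ₗ[ℂ] MatC (Fin 2) :=
  krausMap (gadKraus p ε)

/-- The set of costs `|c₁| + |c₂|` over all two-channel retrievers for the shadow
information `tr[ρ O]` through the noisy channel `N`: real numbers `c₁, c₂` and
quantum channels `D₁, D₂` such that `D = c₁·D₁ + c₂·D₂` satisfies
`tr[D(N(ρ))·O] = tr[ρ·O]` for every density matrix `ρ`. -/
def retrCosts {n : Type*} [Fintype n] [DecidableEq n]
    (N : MatC n →ₗ[ℂ] MatC n) (O : MatC n) : Set ℝ :=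
  {s | ∃ (c₁ c₂ : ℝ) (D₁ D₂ : MatC n →ₗ[ℂ] MatC n),
    IsQuantumChannel D₁ ∧ IsQuantumChannel D₂ ∧
    (∀ ρ : MatC n, IsDensityMatrix ρ →
      ((((c₁ : ℂ) • D₁ + (c₂ : ℂ) • D₂) (N ρ)) * O).trace = (ρ * O).trace) ∧
    s = |c₁| + |c₂|}

/-!
Lower bound: a qubit channel `D` maps `|i⟩⟨i|` to a state, so `tr[D(|i⟩⟨i|) Z] ∈ [-1, 1]`, and for
`D = c₁ D₁ + c₂ D₂` the two numbers `G = tr[D(|0⟩⟨0|) Z]`, `H = tr[D(|1⟩⟨1|) Z]` are bounded by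
`|c₁| + |c₂|`. The channel `N` maps `|0⟩⟨0|` and `|1⟩⟨1|` to diagonal states, so retrieval on these
two inputs is a 2×2 linear system with solution `(1 - ε) G = 1 + ε(1 - 2p)`,
`(1 - ε) H = -(1 - ε(1 - 2p))`, whence `|c₁| + |c₂| ≥ (1 + ε|1 - 2p|) / (1 - ε)`.

Upper bound: `tr[N(ρ) Z] = (1 - ε) tr[ρ Z] - ε(1 - 2p) tr ρ`, which is inverted by the difference of
the maps `σ ↦ (x tr[σ Z] + y tr σ) Z + (tr σ / 2) I` with parameters `±(x, y)`. Their Choi matrices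
are diagonal with entries `1/2 ± x ± y`, so they are channels as soon as `|x| + |y| ≤ 1/2`, and the
optimal parameters attain equality.
-/

lemma trace_mul_pauliZ (σ : MatC (Fin 2)) : (σ * PauliZ).trace = σ 0 0 - σ 1 1 := by
  simp [PauliZ, trace_fin_two, mul_apply, Fin.sum_univ_two, sub_eq_add_neg]

lemma isDensityMatrix_single {n : Type*} [Fintype n] [DecidableEq n] (i : n) :
    IsDensityMatrix (single i i (1 : ℂ)) :=
  ⟨diagonal_single i (1 : ℂ) ▸ PosSemidef.diagonal (Pi.single_nonneg.mpr zero_le_one),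
    trace_single_eq_same i 1⟩

lemma IsQuantumChannel.exists_trace_mul_pauliZ_single {D : MatC (Fin 2) →ₗ[ℂ] MatC (Fin 2)}
    (hD : IsQuantumChannel D) (i : Fin 2) :
    ∃ g : ℝ, |g| ≤ 1 ∧ (D (single i i 1) * PauliZ).trace = g := by
  set σ := D (single i i 1)
  -- the diagonal of `D |i⟩⟨i|` is part of the diagonal of the Choi matrix
  obtain ⟨h0, h0im⟩ := Complex.nonneg_iff.mp (show 0 ≤ σ 0 0 from hD.1.diag_nonneg (i := (i, 0)))
  obtain ⟨h1, h1im⟩ := Complex.nonneg_iff.mp (show 0 ≤ σ 1 1 from hD.1.diag_nonneg (i := (i, 1)))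
  have htr : σ 0 0 + σ 1 1 = 1 := by
    rw [← trace_fin_two, hD.2, trace_single_eq_same]
  have hre : (σ 0 0).re + (σ 1 1).re = 1 := by simpa using congrArg Complex.re htr
  refine ⟨(σ 0 0).re - (σ 1 1).re, abs_le.mpr ⟨by linarith, by linarith⟩, ?_⟩
  rw [trace_mul_pauliZ]
  apply Complex.ext <;> simp [← h0im, ← h1im]

lemma exists_trace_smul_add_smul_mul_pauliZ_single {D₁ D₂ : MatC (Fin 2) →ₗ[ℂ] MatC (Fin 2)}
    (hD₁ : IsQuantumChannel D₁) (hD₂ : IsQuantumChannel D₂) (c₁ c₂ : ℝ) (i : Fin 2) :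
    ∃ G : ℝ, |G| ≤ |c₁| + |c₂| ∧
      ((((c₁ : ℂ) • D₁ + (c₂ : ℂ) • D₂) (single i i 1)) * PauliZ).trace = G := by
  obtain ⟨g₁, hg₁, hD₁g⟩ := hD₁.exists_trace_mul_pauliZ_single i
  obtain ⟨g₂, hg₂, hD₂g⟩ := hD₂.exists_trace_mul_pauliZ_single i
  refine ⟨c₁ * g₁ + c₂ * g₂, ?_, ?_⟩
  · calc |c₁ * g₁ + c₂ * g₂| ≤ |c₁| * |g₁| + |c₂| * |g₂| := by
          simpa only [abs_mul] using abs_add_le (c₁ * g₁) (c₂ * g₂)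
      _ ≤ |c₁| + |c₂| := by
          gcongr <;> exact mul_le_of_le_one_right (abs_nonneg _) ‹_›
  · simp only [LinearMap.add_apply, LinearMap.smul_apply, add_mul, smul_mul, trace_add,
      trace_smul, hD₁g, hD₂g, smul_eq_mul]
    push_cast
    ring

lemma gad_apply {p ε : ℝ} (hp0 : 0 ≤ p) (hp1 : p ≤ 1) (hε0 : 0 ≤ ε) (hε1 : ε ≤ 1)
    (ρ : MatC (Fin 2)) :
    gad p ε ρ = !![((1 - ε * (1 - p) : ℝ) : ℂ) * ρ 0 0 + ((ε * p : ℝ) : ℂ) * ρ 1 1,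
        (Real.sqrt (1 - ε) : ℂ) * ρ 0 1;
      (Real.sqrt (1 - ε) : ℂ) * ρ 1 0,
        ((ε * (1 - p) : ℝ) : ℂ) * ρ 0 0 + ((1 - ε * p : ℝ) : ℂ) * ρ 1 1] := by
  have sq : ∀ t : ℝ, 0 ≤ t → (Real.sqrt t : ℂ) ^ 2 = t := fun t ht => by
    rw [← Complex.ofReal_pow, Real.sq_sqrt ht]
  ext i j
  fin_cases i <;> fin_cases j <;>
    simp [gad, krausMap, gadKraus, Fin.sum_univ_four, vecMul, dotProduct, mul_apply,
      Fin.sum_univ_two, conjTranspose_apply] <;>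
    ring_nf <;>
    simp only [sq p hp0, sq ε hε0, sq (1 - p) (by linarith), sq (1 - ε) (by linarith)] <;>
    push_cast <;> ring

lemma trace_gad {p ε : ℝ} (hp0 : 0 ≤ p) (hp1 : p ≤ 1) (hε0 : 0 ≤ ε) (hε1 : ε ≤ 1)
    (ρ : MatC (Fin 2)) : (gad p ε ρ).trace = ρ.trace := by
  rw [gad_apply hp0 hp1 hε0 hε1, trace_fin_two, trace_fin_two]
  simp only [of_apply, cons_val', cons_val_zero, cons_val_one, empty_val', cons_val_fin_one]
  push_cast
  ring

lemma trace_gad_mul_pauliZ {p ε : ℝ} (hp0 : 0 ≤ p) (hp1 : p ≤ 1) (hε0 : 0 ≤ ε) (hε1 : ε ≤ 1)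
    (ρ : MatC (Fin 2)) :
    (gad p ε ρ * PauliZ).trace =
      ((1 - ε : ℝ) : ℂ) * (ρ * PauliZ).trace - ((ε * (1 - 2 * p) : ℝ) : ℂ) * ρ.trace := by
  rw [trace_mul_pauliZ, trace_mul_pauliZ, gad_apply hp0 hp1 hε0 hε1, trace_fin_two]
  simp only [of_apply, cons_val', cons_val_zero, cons_val_one, empty_val', cons_val_fin_one]
  push_cast
  ring

lemma gad_single_zero {p ε : ℝ} (hp0 : 0 ≤ p) (hp1 : p ≤ 1) (hε0 : 0 ≤ ε) (hε1 : ε ≤ 1) :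
    gad p ε (single 0 0 1) =
      ((1 - ε * (1 - p) : ℝ) : ℂ) • single 0 0 1 + ((ε * (1 - p) : ℝ) : ℂ) • single 1 1 1 := by
  rw [gad_apply hp0 hp1 hε0 hε1]
  ext i j
  fin_cases i <;> fin_cases j <;> simp

lemma gad_single_one {p ε : ℝ} (hp0 : 0 ≤ p) (hp1 : p ≤ 1) (hε0 : 0 ≤ ε) (hε1 : ε ≤ 1) :
    gad p ε (single 1 1 1) =
      ((ε * p : ℝ) : ℂ) • single 0 0 1 + ((1 - ε * p : ℝ) : ℂ) • single 1 1 1 := by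
  rw [gad_apply hp0 hp1 hε0 hε1]
  ext i j
  fin_cases i <;> fin_cases j <;> simp

lemma gad_retrieval_cost_le {p ε G H s : ℝ} (hε1 : ε < 1) (hG : |G| ≤ s) (hH : |H| ≤ s)
    (h0 : (1 - ε * (1 - p)) * G + ε * (1 - p) * H = 1) (h1 : ε * p * G + (1 - ε * p) * H = -1) :
    (|1 - 2 * p| * ε + 1) / (1 - ε) ≤ s := by
  have hε : 0 < 1 - ε := by linarith
  have hG' : (1 - ε) * G = 1 + ε * (1 - 2 * p) := by
    linear_combination (1 - ε * p) * h0 - ε * (1 - p) * h1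
  have hH' : (1 - ε) * H = -(1 - ε * (1 - 2 * p)) := by
    linear_combination -(ε * p) * h0 + (1 - ε * (1 - p)) * h1
  rw [div_le_iff₀ hε]
  rcases abs_cases (1 - 2 * p) with ⟨habs, -⟩ | ⟨habs, -⟩ <;> rw [habs]
  · nlinarith [le_abs_self G]
  · nlinarith [neg_abs_le H]

lemma mem_lowerBounds_retrCosts_gad {p ε : ℝ} (hp0 : 0 ≤ p) (hp1 : p ≤ 1) (hε0 : 0 ≤ ε)
    (hε1 : ε < 1) :
    (|1 - 2 * p| * ε + 1) / (1 - ε) ∈ lowerBounds (retrCosts (gad p ε) PauliZ) := by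
  rintro _ ⟨c₁, c₂, D₁, D₂, hD₁, hD₂, hret, rfl⟩
  obtain ⟨G, hG, hGeq⟩ := exists_trace_smul_add_smul_mul_pauliZ_single hD₁ hD₂ c₁ c₂ 0
  obtain ⟨H, hH, hHeq⟩ := exists_trace_smul_add_smul_mul_pauliZ_single hD₁ hD₂ c₁ c₂ 1
  have h0 := hret _ (isDensityMatrix_single 0)
  have h1 := hret _ (isDensityMatrix_single 1)
  rw [gad_single_zero hp0 hp1 hε0 hε1.le] at h0
  rw [gad_single_one hp0 hp1 hε0 hε1.le] at h1
  simp only [map_add, map_smul, add_mul, smul_mul, trace_add, trace_smul, hGeq, hHeq,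
    trace_mul_pauliZ, smul_eq_mul, single_apply_same, single_apply_of_ne, zero_ne_one, one_ne_zero,
    and_self, not_false_eq_true, sub_zero, zero_sub] at h0 h1
  refine gad_retrieval_cost_le hε1 hG hH ?_ ?_
  · exact_mod_cast h0
  · exact_mod_cast h1

noncomputable def zRetriever (x y : ℝ) : MatC (Fin 2) →ₗ[ℂ] MatC (Fin 2) where
  toFun σ := ((x : ℂ) * (σ * PauliZ).trace + (y : ℂ) * σ.trace) • PauliZ + (σ.trace / 2) • 1
  map_add' σ τ := by
    simp only [add_mul, trace_add]
    module
  map_smul' c σ := by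
    simp only [smul_mul, trace_smul, smul_eq_mul, RingHom.id_apply]
    module

lemma zRetriever_apply (x y : ℝ) (σ : MatC (Fin 2)) :
    zRetriever x y σ =
      ((x : ℂ) * (σ * PauliZ).trace + (y : ℂ) * σ.trace) • PauliZ + (σ.trace / 2) • 1 :=
  rfl

lemma choi_zRetriever_eq_diagonal (x y : ℝ) :
    choi (zRetriever x y) = diagonal fun ik : Fin 2 × Fin 2 =>
      ((1 / 2 + x * ![1, -1] ik.1 * ![1, -1] ik.2 + y * ![1, -1] ik.2 : ℝ) : ℂ) := by
  ext ⟨i, k⟩ ⟨j, l⟩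
  fin_cases i <;> fin_cases k <;> fin_cases j <;> fin_cases l <;>
    simp [choi, zRetriever_apply, trace_fin_two, PauliZ, diagonal] <;> ring

lemma choi_zRetriever (x y : ℝ) :
    choi (zRetriever x y) =
      (x : ℂ) • (PauliZ ⊗ₖ PauliZ) + (y : ℂ) • ((1 : MatC (Fin 2)) ⊗ₖ PauliZ) +
        (1 / 2 : ℂ) • ((1 : MatC (Fin 2)) ⊗ₖ (1 : MatC (Fin 2))) := by
  rw [choi_zRetriever_eq_diagonal]
  ext ⟨i, k⟩ ⟨j, l⟩
  fin_cases i <;> fin_cases k <;> fin_cases j <;> fin_cases l <;>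
    simp [PauliZ, diagonal, kroneckerMap_apply, one_apply] <;> ring

lemma zRetriever_isQuantumChannel {x y : ℝ} (hxy : |x| + |y| ≤ 1 / 2) :
    IsQuantumChannel (zRetriever x y) := by
  refine ⟨?_, fun σ => ?_⟩
  · rw [choi_zRetriever_eq_diagonal, posSemidef_diagonal_iff]
    rintro ⟨i, k⟩
    rw [Complex.zero_le_real]
    fin_cases i <;> fin_cases k <;> simp <;>
      linarith [le_abs_self x, neg_abs_le x, le_abs_self y, neg_abs_le y]
  · simp [zRetriever_apply, trace_add, trace_smul, PauliZ, trace_fin_two]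

lemma trace_zRetriever_mul_pauliZ (x y : ℝ) (σ : MatC (Fin 2)) :
    (zRetriever x y σ * PauliZ).trace =
      2 * ((x : ℂ) * (σ * PauliZ).trace + (y : ℂ) * σ.trace) := by
  rw [trace_mul_pauliZ, zRetriever_apply]
  simp only [PauliZ, smul_of, smul_cons, smul_eq_mul, mul_one, mul_zero, smul_empty, mul_neg,
    Matrix.add_apply, Matrix.smul_apply, of_apply, cons_val', cons_val_zero, cons_val_one,
    cons_val_fin_one, one_apply_eq]
  ring

lemma trace_zRetriever_sub_mul_pauliZ (c x y : ℝ) (σ : MatC (Fin 2)) :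
    ((((c : ℂ) • zRetriever x y + ((-c : ℝ) : ℂ) • zRetriever (-x) (-y)) σ) * PauliZ).trace =
      4 * c * ((x : ℂ) * (σ * PauliZ).trace + (y : ℂ) * σ.trace) := by
  simp only [LinearMap.add_apply, LinearMap.smul_apply, add_mul, smul_mul, trace_add, trace_smul,
    trace_zRetriever_mul_pauliZ, smul_eq_mul]
  push_cast
  ring

lemma trace_zRetriever_sub_gad_mul_pauliZ {p ε c x y : ℝ} (hp0 : 0 ≤ p) (hp1 : p ≤ 1)
    (hε0 : 0 ≤ ε) (hε1 : ε ≤ 1) (hcx : 4 * c * x * (1 - ε) = 1) (hy : y = ε * (1 - 2 * p) * x)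
    {ρ : MatC (Fin 2)} (hρ : ρ.trace = 1) :
    ((((c : ℂ) • zRetriever x y + ((-c : ℝ) : ℂ) • zRetriever (-x) (-y)) (gad p ε ρ)) *
      PauliZ).trace = (ρ * PauliZ).trace := by
  rw [trace_zRetriever_sub_mul_pauliZ, trace_gad_mul_pauliZ hp0 hp1 hε0 hε1,
    trace_gad hp0 hp1 hε0 hε1, hρ, hy]
  have hcxC : 4 * (c : ℂ) * x * (1 - ε) = 1 := mod_cast hcx
  push_cast
  linear_combination (ρ * PauliZ).trace * hcxC

/-- The retrieving cost of the observable `Z` through the generalized amplitude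
damping channel is `(|1−2p|ε+1)/(1−ε)`, attained by the explicit retriever
`D = c₁·D₁ + c₂·D₂` with `c₁ = −c₂ = (|1−2p|ε+1)/(2(1−ε))` and the stated
Choi matrices. -/
theorem stmt15 (p ε : ℝ) (hp0 : 0 ≤ p) (hp1 : p ≤ 1) (hε0 : 0 ≤ ε) (hε1 : ε < 1) :
    IsLeast (retrCosts (gad p ε) PauliZ) ((|1 - 2 * p| * ε + 1) / (1 - ε)) ∧
    ∃ D₁ D₂ : MatC (Fin 2) →ₗ[ℂ] MatC (Fin 2),
      IsQuantumChannel D₁ ∧ IsQuantumChannel D₂ ∧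
      choi D₁ = ((1 / (2 * (|1 - 2 * p| * ε + 1)) : ℝ) : ℂ) • (PauliZ ⊗ₖ PauliZ) +
        ((ε * (1 - 2 * p) / (2 * (|1 - 2 * p| * ε + 1)) : ℝ) : ℂ) •
          ((1 : MatC (Fin 2)) ⊗ₖ PauliZ) +
        (1 / 2 : ℂ) • ((1 : MatC (Fin 2)) ⊗ₖ (1 : MatC (Fin 2))) ∧
      choi D₂ = -(((1 / (2 * (|1 - 2 * p| * ε + 1)) : ℝ) : ℂ) • (PauliZ ⊗ₖ PauliZ)) -
        ((ε * (1 - 2 * p) / (2 * (|1 - 2 * p| * ε + 1)) : ℝ) : ℂ) •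
          ((1 : MatC (Fin 2)) ⊗ₖ PauliZ) +
        (1 / 2 : ℂ) • ((1 : MatC (Fin 2)) ⊗ₖ (1 : MatC (Fin 2))) ∧
      ∃ c₁ c₂ : ℝ, c₁ = (|1 - 2 * p| * ε + 1) / (2 * (1 - ε)) ∧ c₂ = -c₁ ∧
        (∀ ρ : MatC (Fin 2), IsDensityMatrix ρ →
          ((((c₁ : ℂ) • D₁ + (c₂ : ℂ) • D₂) (gad p ε ρ)) * PauliZ).trace =
            (ρ * PauliZ).trace) ∧
        |c₁| + |c₂| = (|1 - 2 * p| * ε + 1) / (1 - ε) := by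
  have hε : 0 < 1 - ε := by linarith
  set x := 1 / (2 * (|1 - 2 * p| * ε + 1)) with hx
  set y := ε * (1 - 2 * p) / (2 * (|1 - 2 * p| * ε + 1)) with hy
  set c := (|1 - 2 * p| * ε + 1) / (2 * (1 - ε)) with hc
  have hxy : |x| + |y| = 1 / 2 := by
    rw [abs_of_pos (by positivity : 0 < x), abs_div, abs_mul, abs_of_nonneg hε0,
      abs_of_pos (by positivity : 0 < 2 * (|1 - 2 * p| * ε + 1)), hx]
    field_simp
    ring
  have hD₁ := zRetriever_isQuantumChannel hxy.le
  have hD₂ : IsQuantumChannel (zRetriever (-x) (-y)) :=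
    zRetriever_isQuantumChannel (by rw [abs_neg, abs_neg, hxy])
  have hcx : 4 * c * x * (1 - ε) = 1 := by rw [hc, hx]; field_simp; ring
  have hret : ∀ ρ : MatC (Fin 2), IsDensityMatrix ρ →
      ((((c : ℂ) • zRetriever x y + ((-c : ℝ) : ℂ) • zRetriever (-x) (-y)) (gad p ε ρ)) *
        PauliZ).trace = (ρ * PauliZ).trace := fun ρ hρ =>
    trace_zRetriever_sub_gad_mul_pauliZ hp0 hp1 hε0 hε1.le hcx (by rw [hy, hx]; ring) hρ.2
  have hcost : |c| + |-c| = (|1 - 2 * p| * ε + 1) / (1 - ε) := by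
    rw [abs_neg, abs_of_pos (by positivity), hc]
    field_simp
    ring
  refine ⟨⟨⟨c, -c, _, _, hD₁, hD₂, hret, hcost.symm⟩,
      mem_lowerBounds_retrCosts_gad hp0 hp1 hε0 hε1⟩,
    _, _, hD₁, hD₂, choi_zRetriever x y, ?_, c, -c, rfl, rfl, hret, hcost⟩
  rw [choi_zRetriever]
  push_cast
  simp only [neg_smul, sub_eq_add_neg]
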